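/- arXiv:2003.06283 — 5 statements merged into one kernel-verified Lean document; each statement's English description precedes it below -/
import Mathlib

section
/- For every k ∈ ℕ and every x ∈ ℝ, the derivative of the shifted Legendre polynomial expands as d𝓛_k/dx (x) = Σ_{j=0}^{k} ℓ_{kj} 𝓛_j(x), where ℓ_{kj} = (2j+1)(1 − (−1)^{k+j}). -/
/-!
Write `u = X (1 - X)`. Rodrigues' formula `n! Pₙ = Dⁿ (uⁿ)` for Mathlib's shifted Legendre
polynomials `Pₙ = (-1)ⁿ 𝓛ₙ`, together with `D² (uⁿ⁺²) = (n+2)(n+1) uⁿ - 2(n+2)(2n+3) uⁿ⁺¹`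
(from `u'² = 1 - 4u` and `u'' = -2`), gives the recurrence `𝓛'ₙ₊₂ = 𝓛'ₙ + 2(2n+3) 𝓛ₙ₊₁`.
Since `ℓ_{n+2,j} = ℓ_{n,j}` for `j ≤ n`, `ℓ_{n+2,n+1} = 2(2n+3)` and `ℓ_{n+2,n+2} = 0`,
the expansion follows by induction in steps of two.
-/

open Finset

/-- The shifted Legendre polynomial on `[0,1]`:
`𝓛_k(x) = (−1)^k ∑_{l=0}^{k} (−1)^l (k choose l) ((k+l) choose l) x^l`. -/
noncomputable def shiftedLegendre (k : ℕ) (x : ℝ) : ℝ :=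
  (-1 : ℝ) ^ k *
    ∑ l ∈ range (k + 1),
      (-1 : ℝ) ^ l * (k.choose l) * ((k + l).choose l) * x ^ l

/-- The coefficients `ℓ_{kj} = (2j+1)(1 − (−1)^{k+j})` for `j ≤ k`,
and `ℓ_{kj} = 0` for `j > k`. -/
noncomputable def legendreCoeff (k j : ℕ) : ℝ :=
  if j ≤ k then (2 * (j : ℝ) + 1) * (1 - (-1 : ℝ) ^ (k + j)) else 0

namespace Polynomial

open scoped Nat

theorem iterate_derivative_two_X_mul_one_sub_X_pow {R : Type*} [CommRing R] (n : ℕ) :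
    derivative^[2] ((X * (1 - X) : R[X]) ^ (n + 2)) =
      C (((n : R) + 2) * (n + 1)) * (X * (1 - X)) ^ n
        - C (2 * ((n : R) + 2) * (2 * n + 3)) * (X * (1 - X)) ^ (n + 1) := by
  set u : R[X] := X * (1 - X)
  have hu' : derivative u = 1 - 2 * X := by
    simp only [u, derivative_mul, derivative_X, derivative_sub, derivative_one]; ring
  have hu'' : derivative (derivative u) = -2 := by
    rw [hu']; simp
  have hsq : derivative u ^ 2 = 1 - 4 * u := by rw [hu']; ring
  simp only [Function.iterate_succ, Function.iterate_zero, Function.comp_apply, id,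
    derivative_pow_succ, derivative_mul, derivative_C, hu'']
  simp only [C_mul, C_add, C_ofNat, C_1, map_natCast, Nat.cast_add, Nat.cast_one]
  linear_combination (↑n + 2 : R[X]) * (↑n + 1) * u ^ n * hsq

theorem factorial_mul_shiftedLegendre_eq_iterate_derivative_pow (n : ℕ) :
    (n ! : ℤ[X]) * shiftedLegendre n = derivative^[n] ((X * (1 - X)) ^ n) := by
  rw [factorial_mul_shiftedLegendre_eq, mul_pow]

theorem derivative_shiftedLegendre_add_two (n : ℕ) :
    derivative (shiftedLegendre (n + 2)) =
      derivative (shiftedLegendre n) - 2 * (2 * n + 3) * shiftedLegendre (n + 1) := by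
  refine nat_mul_inj' ?_ (Nat.factorial_ne_zero (n + 2))
  calc ((n + 2)! : ℤ[X]) * derivative (shiftedLegendre (n + 2))
      = derivative^[n + 1] (derivative^[2] ((X * (1 - X)) ^ (n + 2))) := by
        rw [← Function.iterate_add_apply, Function.iterate_succ_apply',
          ← factorial_mul_shiftedLegendre_eq_iterate_derivative_pow, derivative_natCast_mul]
    _ = C (((n : ℤ) + 2) * (n + 1)) * derivative (derivative^[n] ((X * (1 - X)) ^ n))
          - C (2 * ((n : ℤ) + 2) * (2 * n + 3)) * derivative^[n + 1] ((X * (1 - X)) ^ (n + 1)) := by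
        rw [iterate_derivative_two_X_mul_one_sub_X_pow, iterate_derivative_sub,
          iterate_derivative_C_mul, iterate_derivative_C_mul, Function.iterate_succ_apply']
    _ = _ := by
        rw [← factorial_mul_shiftedLegendre_eq_iterate_derivative_pow,
          ← factorial_mul_shiftedLegendre_eq_iterate_derivative_pow, derivative_natCast_mul]
        simp only [map_mul, map_add, map_natCast, map_ofNat, map_one]
        push_cast [Nat.factorial_succ]
        ring

end Polynomial

open Polynomial (aeval derivative)

theorem shiftedLegendre_eq_aeval (k : ℕ) :
    shiftedLegendre k = fun x => (-1) ^ k * aeval x (Polynomial.shiftedLegendre k) := by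
  funext x
  simp [shiftedLegendre, Polynomial.shiftedLegendre, Nat.choose_symm_add (a := k)]

theorem deriv_shiftedLegendre (k : ℕ) (x : ℝ) :
    deriv (shiftedLegendre k) x =
      (-1) ^ k * aeval x (derivative (Polynomial.shiftedLegendre k)) := by
  rw [shiftedLegendre_eq_aeval, deriv_const_mul _ (Polynomial.differentiableAt_aeval _),
    Polynomial.deriv_aeval]

theorem deriv_shiftedLegendre_add_two (n : ℕ) (x : ℝ) :
    deriv (shiftedLegendre (n + 2)) x =
      deriv (shiftedLegendre n) x + 2 * (2 * n + 3) * shiftedLegendre (n + 1) x := by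
  rw [deriv_shiftedLegendre, deriv_shiftedLegendre, shiftedLegendre_eq_aeval,
    Polynomial.derivative_shiftedLegendre_add_two]
  simp only [map_sub, map_mul, map_add, map_natCast, map_ofNat]
  ring

theorem legendreCoeff_add_two_of_le {k j : ℕ} (h : j ≤ k) :
    legendreCoeff (k + 2) j = legendreCoeff k j := by
  simp [legendreCoeff, h, h.trans (by omega : k ≤ k + 2), pow_add]

theorem legendreCoeff_self (k : ℕ) : legendreCoeff k k = 0 := by
  simp [legendreCoeff, ← two_mul, pow_mul]

theorem legendreCoeff_succ_self (k : ℕ) : legendreCoeff (k + 1) k = 2 * (2 * k + 1) := by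
  rw [legendreCoeff, if_pos k.le_succ, Odd.neg_one_pow ⟨k, by ring⟩]
  ring

/-- Derivative expansion of the shifted Legendre polynomial:
`d𝓛_k/dx (x) = ∑_{j=0}^{k} ℓ_{kj} 𝓛_j(x)`. -/
theorem shiftedLegendre_deriv (k : ℕ) (x : ℝ) :
    deriv (shiftedLegendre k) x =
      ∑ j ∈ range (k + 1), legendreCoeff k j * shiftedLegendre j x := by
  induction k using Nat.twoStepInduction with
  | zero => simp [deriv_shiftedLegendre, Polynomial.shiftedLegendre, legendreCoeff]
  | one =>
    simp [deriv_shiftedLegendre, Polynomial.shiftedLegendre, legendreCoeff, shiftedLegendre,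
      sum_range_succ]
  | more n ih _ =>
    have hlow : ∑ j ∈ range (n + 1), legendreCoeff (n + 2) j * shiftedLegendre j x =
        ∑ j ∈ range (n + 1), legendreCoeff n j * shiftedLegendre j x :=
      sum_congr rfl fun j hj => by rw [legendreCoeff_add_two_of_le (mem_range_succ_iff.mp hj)]
    rw [deriv_shiftedLegendre_add_two, ih, sum_range_succ _ (n + 2), sum_range_succ _ (n + 1),
      hlow, legendreCoeff_self, legendreCoeff_succ_self]
    push_cast
    ring
end

section
/- Let ρ > 0, l ∈ ℕ, let S ∈ ℝ^{l×l} be symmetric, and let z : [0,1] × [0,∞) → ℝ^l be continuously differentiable, satisfy the transport equation z_t(x,t) = −ρ z_x(x,t) for all (x,t) ∈ [0,1] × [0,∞), and have zero initial condition z(x,0) = 0 for all x ∈ [0,1]. Then for every T ≥ 0 the energy balance ∫₀¹ z(x,T)ᵀ S z(x,T) dx = ρ ∫₀^T ( z(0,t)ᵀ S z(0,t) − z(1,t)ᵀ S z(1,t) ) dt holds. -/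
/-!
The quadratic form `q = zᵀ S z` of a solution again solves `q_t + ρ q_x = 0`, i.e. the vector
field `(ρ q, q)` in the `(x, t)`-plane is divergence free. The divergence theorem on
`[0, 1] × [0, T]` then balances the flux `∫ q(x, T) dx` through the top edge against the flux
`ρ ∫ (q(0, t) - q(1, t)) dt` through the sides; the bottom edge contributes nothing as `z(·, 0) = 0`.
-/

open Matrix MeasureTheory Set

section DotProduct

variable {𝕜 : Type*} [NontriviallyNormedField 𝕜] {n : Type*} [Fintype n]

theorem HasDerivAt.dotProduct {v w : 𝕜 → n → 𝕜} {v' w' : n → 𝕜} {t : 𝕜}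
    (hv : HasDerivAt v v' t) (hw : HasDerivAt w w' t) :
    HasDerivAt (fun s => v s ⬝ᵥ w s) (v' ⬝ᵥ w t + v t ⬝ᵥ w') t := by
  have := HasDerivAt.fun_sum (u := Finset.univ) fun i _ =>
    (hasDerivAt_pi.mp hv i).mul (hasDerivAt_pi.mp hw i)
  rw [Finset.sum_add_distrib] at this
  exact this

theorem HasDerivAt.matrix_mulVec {m : Type*} [Fintype m] (A : Matrix m n 𝕜) {w : 𝕜 → n → 𝕜}
    {w' : n → 𝕜} {t : 𝕜} (hw : HasDerivAt w w' t) :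
    HasDerivAt (fun s => A *ᵥ w s) (A *ᵥ w') t :=
  hasDerivAt_pi.mpr fun i => by
    have := (hasDerivAt_const t (A i)).dotProduct hw
    rw [zero_dotProduct, zero_add] at this
    exact this

variable {E : Type*} [NormedAddCommGroup E] [NormedSpace 𝕜 E] {k : WithTop ℕ∞}

theorem ContDiff.dotProduct {v w : E → n → 𝕜} (hv : ContDiff 𝕜 k v) (hw : ContDiff 𝕜 k w) :
    ContDiff 𝕜 k (fun x => v x ⬝ᵥ w x) :=
  ContDiff.sum fun i _ => (contDiff_pi.mp hv i).mul (contDiff_pi.mp hw i)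

theorem ContDiff.matrix_mulVec {m : Type*} [Fintype m] (A : Matrix m n 𝕜) {w : E → n → 𝕜}
    (hw : ContDiff 𝕜 k w) : ContDiff 𝕜 k (fun x => A *ᵥ w x) :=
  contDiff_pi.mpr fun i => (contDiff_const (c := A i)).dotProduct hw

end DotProduct

section Slices

variable {F : Type*} [NormedAddCommGroup F] [NormedSpace ℝ F]
  {f : ℝ × ℝ → F} {f' : ℝ × ℝ →L[ℝ] F} {x t : ℝ}

theorem HasFDerivAt.hasDerivAt_slice_fst (hf : HasFDerivAt f f' (x, t)) :
    HasDerivAt (fun y => f (y, t)) (f' (1, 0)) x :=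
  hf.comp_hasDerivAt x ((hasDerivAt_id x).prodMk (hasDerivAt_const x t))

theorem HasFDerivAt.hasDerivAt_slice_snd (hf : HasFDerivAt f f' (x, t)) :
    HasDerivAt (fun s => f (x, s)) (f' (0, 1)) t :=
  hf.comp_hasDerivAt t ((hasDerivAt_const t x).prodMk (hasDerivAt_id t))

end Slices

theorem deriv_dotProduct_mulVec_slice_snd {n : Type*} [Fintype n] (S : Matrix n n ℝ)
    {z : ℝ × ℝ → n → ℝ} {x t c : ℝ} (hz : DifferentiableAt ℝ z (x, t))
    (hpde : deriv (fun s => z (x, s)) t = c • deriv (fun y => z (y, t)) x) :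
    deriv (fun s => z (x, s) ⬝ᵥ S *ᵥ z (x, s)) t =
      c • deriv (fun y => z (y, t) ⬝ᵥ S *ᵥ z (y, t)) x := by
  have hzt := hz.hasFDerivAt.hasDerivAt_slice_snd
  have hzx := hz.hasFDerivAt.hasDerivAt_slice_fst
  rw [hzt.dotProduct (hzt.matrix_mulVec S) |>.deriv,
    hzx.dotProduct (hzx.matrix_mulVec S) |>.deriv, ← hzt.deriv, ← hzx.deriv, hpde]
  simp only [smul_dotProduct, mulVec_smul, dotProduct_smul, smul_add]

theorem integral_sub_integral_of_transport {q : ℝ × ℝ → ℝ} (hq : ContDiff ℝ 1 q)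
    (ρ a b t₀ t₁ : ℝ)
    (hpde : ∀ x ∈ uIcc a b, ∀ t ∈ uIcc t₀ t₁,
      deriv (fun s => q (x, s)) t = -ρ • deriv (fun y => q (y, t)) x) :
    (∫ x in a..b, q (x, t₁)) - ∫ x in a..b, q (x, t₀) =
      ρ * ((∫ t in t₀..t₁, q (a, t)) - ∫ t in t₀..t₁, q (b, t)) := by
  have hdiff : ∀ p, HasFDerivAt q (fderiv ℝ q p) p := fun p =>
    (hq.differentiable one_ne_zero p).hasFDerivAt
  have hdiv : ∀ x ∈ uIcc a b, ∀ t ∈ uIcc t₀ t₁,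
      (ρ • fderiv ℝ q (x, t)) (1, 0) + fderiv ℝ q (x, t) (0, 1) = 0 := by
    intro x hx t ht
    have hpde_xt := hpde x hx t ht
    rw [(hdiff (x, t)).hasDerivAt_slice_snd.deriv,
      (hdiff (x, t)).hasDerivAt_slice_fst.deriv] at hpde_xt
    simp only [_root_.smul_apply, hpde_xt, smul_eq_mul]
    ring
  have hcont : Continuous fun p => (ρ • fderiv ℝ q p) (1, 0) + fderiv ℝ q p (0, 1) :=
    have := hq.continuous_fderiv one_ne_zero
    by fun_prop
  have green := integral2_divergence_prod_of_hasFDerivAt (fun p => ρ • q p) q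
    (fun p => ρ • fderiv ℝ q p) (fderiv ℝ q) a t₀ b t₁
    (hq.continuous.const_smul ρ).continuousOn hq.continuous.continuousOn
    (fun p _ => (hdiff p).const_smul ρ) (fun p _ => hdiff p)
    (hcont.continuousOn.integrableOn_compact (isCompact_uIcc.prod isCompact_uIcc))
  have hdiv_integral : (∫ x in a..b, ∫ t in t₀..t₁,
      (ρ • fderiv ℝ q (x, t)) (1, 0) + fderiv ℝ q (x, t) (0, 1)) = 0 := by
    refine (intervalIntegral.integral_congr fun x hx => ?_).trans intervalIntegral.integral_zero
    exact (intervalIntegral.integral_congr fun t ht => hdiv x hx t ht).trans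
      intervalIntegral.integral_zero
  simp only [smul_eq_mul, intervalIntegral.integral_const_mul] at green
  linarith

theorem transport_energy_balance_general
    (ρ : ℝ) (l : ℕ)
    (S : Matrix (Fin l) (Fin l) ℝ)
    (z : ℝ × ℝ → Fin l → ℝ)
    (hz : ContDiff ℝ 1 z)
    (hpde : ∀ x ∈ Set.Icc (0:ℝ) 1, ∀ t ≥ (0:ℝ),
      deriv (fun s => z (x, s)) t = -ρ • deriv (fun y => z (y, t)) x)
    (hinit : ∀ x ∈ Set.Icc (0:ℝ) 1, z (x, 0) = 0) :
    ∀ T ≥ (0:ℝ),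
      ∫ x in (0:ℝ)..1, z (x, T) ⬝ᵥ S.mulVec (z (x, T)) =
        ρ * ∫ t in (0:ℝ)..T,
          (z (0, t) ⬝ᵥ S.mulVec (z (0, t)) - z (1, t) ⬝ᵥ S.mulVec (z (1, t))) := by
  intro T hT
  have hq : ContDiff ℝ 1 fun p => z p ⬝ᵥ S *ᵥ z p := hz.dotProduct (hz.matrix_mulVec S)
  have balance := integral_sub_integral_of_transport hq ρ 0 1 0 T fun x hx t ht =>
    deriv_dotProduct_mulVec_slice_snd S (hz.differentiable one_ne_zero _)
      (hpde x (uIcc_of_le (zero_le_one' ℝ) ▸ hx) t (uIcc_of_le hT ▸ ht).1)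
  have hinit_energy : (∫ x in (0:ℝ)..1, z (x, 0) ⬝ᵥ S *ᵥ z (x, 0)) = 0 := by
    refine (intervalIntegral.integral_congr fun x hx => ?_).trans intervalIntegral.integral_zero
    simp [hinit x (uIcc_of_le (zero_le_one' ℝ) ▸ hx)]
  have hint : ∀ x : ℝ, IntervalIntegrable (fun t => z (x, t) ⬝ᵥ S *ᵥ z (x, t)) volume 0 T :=
    fun x => (hq.continuous.comp (continuous_const.prodMk continuous_id)).intervalIntegrable _ _
  rw [intervalIntegral.integral_sub (hint 0) (hint 1)]
  linarith

/-- Energy balance for the transport equation: if `z_t = −ρ z_x` on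
`[0,1] × [0,∞)` with `z(·,0) = 0` and `S = Sᵀ`, then for every `T ≥ 0`,
`∫₀¹ z(x,T)ᵀ S z(x,T) dx = ρ ∫₀^T ( z(0,t)ᵀ S z(0,t) − z(1,t)ᵀ S z(1,t) ) dt`. -/
theorem transport_energy_balance
    (ρ : ℝ) (hρ : 0 < ρ) (l : ℕ)
    (S : Matrix (Fin l) (Fin l) ℝ) (hS : S.IsSymm)
    (z : ℝ × ℝ → Fin l → ℝ)
    (hz : ContDiff ℝ 1 z)
    (hpde : ∀ x ∈ Set.Icc (0:ℝ) 1, ∀ t ≥ (0:ℝ),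
      deriv (fun s => z (x, s)) t = -ρ • deriv (fun y => z (y, t)) x)
    (hinit : ∀ x ∈ Set.Icc (0:ℝ) 1, z (x, 0) = 0) :
    ∀ T ≥ (0:ℝ),
      ∫ x in (0:ℝ)..1, z (x, T) ⬝ᵥ S.mulVec (z (x, T)) =
        ρ * ∫ t in (0:ℝ)..T,
          (z (0, t) ⬝ᵥ S.mulVec (z (0, t)) - z (1, t) ⬝ᵥ S.mulVec (z (1, t))) :=
  transport_energy_balance_general ρ l S z hz hpde hinit
end

section
/- (Lemma 1) Let ρ > 0, l ∈ ℕ, N ∈ ℕ, let S ∈ ℝ^{l×l} be symmetric positive definite, and let z : [0,1] × [0,∞) → ℝ^l be continuously differentiable, satisfy the transport equation z_t(x,t) = −ρ z_x(x,t) for all (x,t) ∈ [0,1] × [0,∞), and have zero initial condition z(x,0) = 0 for all x ∈ [0,1]. Define Ω_k(t) = ∫₀¹ z(x,t) 𝓛_k(x) dx. Then for every T ≥ 0: ρ ∫₀^T ( z(0,t)ᵀ S z(0,t) − z(1,t)ᵀ S z(1,t) ) dt − Σ_{k=0}^{N} (2k+1) Ω_k(T)ᵀ S Ω_k(T) ≥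 0. -/
open Finset Matrix

/-!
Integrating the transport equation for the energy density `zᵀ S z` over `[0,1] × [0,T]`
(divergence theorem) turns the supply `ρ ∫₀ᵀ (z(0,t)ᵀ S z(0,t) − z(1,t)ᵀ S z(1,t)) dt` into the
terminal energy `∫₀¹ z(x,T)ᵀ S z(x,T) dx`, since `z(·,0) = 0`. The moments `Ω_k(T)` are the
coefficients of the projection of `z(·,T)` onto polynomials of degree `≤ N`, so Bessel's
inequality for the positive semidefinite form `S` bounds `∑ (2k+1) Ω_kᵀ S Ω_k` by that energy.
The orthogonality `∫₀¹ 𝓛_j 𝓛_k = δ_jk / (2k+1)` follows from Rodrigues' formula by repeated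
integration by parts.
-/

open Polynomial hiding shiftedLegendre
open scoped Nat Interval

theorem Polynomial.integral_eval_mul_eval_derivative (a b : ℝ) (p q : ℝ[X]) :
    ∫ x in a..b, p.eval x * (derivative q).eval x =
      p.eval b * q.eval b - p.eval a * q.eval a - ∫ x in a..b, (derivative p).eval x * q.eval x :=
  intervalIntegral.integral_mul_deriv_eq_deriv_mul (fun x _ ↦ p.hasDerivAt x)
    (fun x _ ↦ q.hasDerivAt x) ((derivative p).continuous.intervalIntegrable a b)
    ((derivative q).continuous.intervalIntegrable a b)

theorem Polynomial.integral_eval_mul_eval_iterate_derivative {a b : ℝ} (p q : ℝ[X]) (k : ℕ)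
    (hq : ∀ i < k, (derivative^[i] q).eval a = 0 ∧ (derivative^[i] q).eval b = 0) :
    ∫ x in a..b, p.eval x * (derivative^[k] q).eval x =
      (-1) ^ k * ∫ x in a..b, (derivative^[k] p).eval x * q.eval x := by
  induction k generalizing p with
  | zero => simp
  | succ k ih =>
    obtain ⟨hqa, hqb⟩ := hq k k.lt_add_one
    rw [Function.iterate_succ_apply', integral_eval_mul_eval_derivative, hqa, hqb,
      ih _ fun i hi ↦ hq i (hi.trans k.lt_add_one), ← Function.iterate_succ_apply]
    ring

theorem integral_pow_mul_one_sub_pow_succ (m n : ℕ) :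
    (m + 1) * ∫ x in (0 : ℝ)..1, x ^ m * (1 - x) ^ (n + 1) =
      (n + 1) * ∫ x in (0 : ℝ)..1, x ^ (m + 1) * (1 - x) ^ n := by
  have hderiv (x : ℝ) : HasDerivAt (fun x ↦ x ^ (m + 1) * (1 - x) ^ (n + 1))
      ((m + 1) * (x ^ m * (1 - x) ^ (n + 1)) - (n + 1) * (x ^ (m + 1) * (1 - x) ^ n)) x := by
    refine ((hasDerivAt_pow (m + 1) x).fun_mul
      (((hasDerivAt_id' x).const_sub 1).fun_pow (n + 1))).congr_deriv ?_
    simp only [Nat.add_sub_cancel]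
    push_cast
    ring
  have h := intervalIntegral.integral_eq_sub_of_hasDerivAt (a := 0) (b := 1)
    (fun x _ ↦ hderiv x) (by apply Continuous.intervalIntegrable; fun_prop)
  rw [intervalIntegral.integral_sub (by apply Continuous.intervalIntegrable; fun_prop)
    (by apply Continuous.intervalIntegrable; fun_prop), intervalIntegral.integral_const_mul,
    intervalIntegral.integral_const_mul] at h
  simp only [one_pow, sub_self, zero_pow (Nat.succ_ne_zero _), mul_zero, sub_zero] at h
  linarith

theorem integral_pow_mul_one_sub_pow (m n : ℕ) :
    ∫ x in (0 : ℝ)..1, x ^ m * (1 - x) ^ n = (((m + n + 1) * (m + n).choose m : ℕ) : ℝ)⁻¹ := by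
  induction n generalizing m with
  | zero => simp
  | succ n ih =>
    have hrec := integral_pow_mul_one_sub_pow_succ m n
    have hchoose : ((m + n + 1).choose (m + 1) : ℝ) * (m + 1) = (m + n + 1).choose m * (n + 1) := by
      exact_mod_cast (Nat.choose_succ_right_eq (m + n + 1) m).trans (by congr 1; omega)
    have hpos : ((m + n + 1).choose (m + 1) : ℝ) ≠ 0 := by
      exact_mod_cast (Nat.choose_pos (show m + 1 ≤ m + n + 1 by omega)).ne'
    rw [ih, show m + 1 + n = m + n + 1 by ring] at hrec
    rw [show m + (n + 1) = m + n + 1 by ring]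
    generalize (∫ x in (0 : ℝ)..1, x ^ m * (1 - x) ^ (n + 1)) = I at hrec ⊢
    refine eq_inv_of_mul_eq_one_left (mul_right_cancel₀ (show (n + 1 : ℝ) ≠ 0 by positivity) ?_)
    push_cast at hrec ⊢
    field_simp at hrec
    linear_combination hrec - I * (m + n + 1 + 1) * hchoose

theorem Polynomial.eval_iterate_derivative_X_pow_mul_one_sub_X_pow {R : Type*} [CommRing R]
    {i k : ℕ} (hi : i < k) {x : R} (hx : x = 0 ∨ x = 1) :
    (derivative^[i] (X ^ k * (1 - X) ^ k : R[X])).eval x = 0 := by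
  obtain ⟨r, hr⟩ := pow_sub_dvd_iterate_derivative_pow (X * (1 - X) : R[X]) k i
  rw [← mul_pow, hr, eval_mul, eval_pow]
  rcases hx with rfl | rfl <;> simp [zero_pow (Nat.sub_ne_zero_of_lt hi)]

theorem Polynomial.iterate_derivative_eq_C_of_natDegree_le {R : Type*} [Semiring R] {p : R[X]}
    {k : ℕ} (hp : p.natDegree ≤ k) : derivative^[k] p = C (k ! * p.coeff k) := by
  rw [eq_C_of_natDegree_le_zero ((natDegree_iterate_derivative p k).trans (by omega)),
    coeff_iterate_derivative, zero_add, Nat.descFactorial_self, nsmul_eq_mul]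

theorem Polynomial.factorial_mul_map_shiftedLegendre (k : ℕ) :
    (k ! : ℝ[X]) * (Polynomial.shiftedLegendre k).map (algebraMap ℤ ℝ) =
      derivative^[k] (X ^ k * (1 - X) ^ k) := by
  simpa [← iterate_derivative_map] using
    congrArg (map (algebraMap ℤ ℝ)) (factorial_mul_shiftedLegendre_eq k)

theorem Polynomial.factorial_mul_integral_eval_mul_aeval_shiftedLegendre (p : ℝ[X]) (k : ℕ) :
    k ! * ∫ x in (0 : ℝ)..1, p.eval x * aeval x (Polynomial.shiftedLegendre k) =
      (-1) ^ k * ∫ x in (0 : ℝ)..1, (derivative^[k] p).eval x * (x ^ k * (1 - x) ^ k) := by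
  have hW : ∀ i < k, (derivative^[i] (X ^ k * (1 - X) ^ k : ℝ[X])).eval 0 = 0 ∧
      (derivative^[i] (X ^ k * (1 - X) ^ k : ℝ[X])).eval 1 = 0 := fun i hi ↦
    ⟨eval_iterate_derivative_X_pow_mul_one_sub_X_pow hi (.inl rfl),
      eval_iterate_derivative_X_pow_mul_one_sub_X_pow hi (.inr rfl)⟩
  rw [← intervalIntegral.integral_const_mul]
  simp_rw [← eval_map_algebraMap, mul_left_comm (k ! : ℝ),
    ← eval_natCast_mul (R := ℝ), factorial_mul_map_shiftedLegendre]
  rw [integral_eval_mul_eval_iterate_derivative _ _ k hW]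
  simp

theorem Polynomial.integral_eval_mul_aeval_shiftedLegendre_of_natDegree_lt {p : ℝ[X]} {k : ℕ}
    (hp : p.natDegree < k) :
    ∫ x in (0 : ℝ)..1, p.eval x * aeval x (Polynomial.shiftedLegendre k) = 0 := by
  have h := factorial_mul_integral_eval_mul_aeval_shiftedLegendre p k
  rw [iterate_derivative_eq_zero hp] at h
  simpa [k.factorial_ne_zero] using h

theorem Polynomial.integral_aeval_shiftedLegendre_mul_self (k : ℕ) :
    ∫ x in (0 : ℝ)..1,
        aeval x (Polynomial.shiftedLegendre k) * aeval x (Polynomial.shiftedLegendre k) =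
      (2 * k + 1 : ℝ)⁻¹ := by
  have hdeg : ((Polynomial.shiftedLegendre k).map (algebraMap ℤ ℝ)).natDegree ≤ k :=
    natDegree_map_le.trans (natDegree_shiftedLegendre k).le
  have h := factorial_mul_integral_eval_mul_aeval_shiftedLegendre
    ((Polynomial.shiftedLegendre k).map (algebraMap ℤ ℝ)) k
  rw [iterate_derivative_eq_C_of_natDegree_le hdeg] at h
  simp only [eval_map_algebraMap, eval_C, intervalIntegral.integral_const_mul,
    integral_pow_mul_one_sub_pow, coeff_map, coeff_shiftedLegendre] at h
  have hC : ((k + k).choose k : ℝ) ≠ 0 := by exact_mod_cast (Nat.choose_pos (by omega)).ne'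
  refine mul_left_cancel₀ (Nat.cast_ne_zero.2 k.factorial_ne_zero) (h.trans ?_)
  push_cast [Nat.choose_self]
  field_simp
  rw [← pow_mul, pow_mul', neg_one_sq, one_pow]
  ring

theorem Polynomial.integral_aeval_shiftedLegendre_mul_aeval_shiftedLegendre (j k : ℕ) :
    ∫ x in (0 : ℝ)..1,
        aeval x (Polynomial.shiftedLegendre j) * aeval x (Polynomial.shiftedLegendre k) =
      if j = k then (2 * k + 1 : ℝ)⁻¹ else 0 := by
  have horth {j k : ℕ} (hjk : j < k) := integral_eval_mul_aeval_shiftedLegendre_of_natDegree_lt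
    (p := (Polynomial.shiftedLegendre j).map (algebraMap ℤ ℝ)) (k := k)
    (natDegree_map_le.trans_lt ((natDegree_shiftedLegendre j).trans_lt hjk))
  simp only [eval_map_algebraMap] at horth
  rcases lt_trichotomy j k with hjk | rfl | hkj
  · rw [if_neg hjk.ne, horth hjk]
  · rw [if_pos rfl, integral_aeval_shiftedLegendre_mul_self]
  · simp_rw [if_neg hkj.ne', mul_comm (aeval _ (Polynomial.shiftedLegendre j)), horth hkj]

theorem shiftedLegendre_eq_neg_one_pow_mul_aeval (k : ℕ) (x : ℝ) :
    shiftedLegendre k x = (-1) ^ k * aeval x (Polynomial.shiftedLegendre k) := by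
  simp [shiftedLegendre, Polynomial.shiftedLegendre, ← Nat.choose_symm_add]

theorem integral_shiftedLegendre_mul_shiftedLegendre (j k : ℕ) :
    ∫ x in (0 : ℝ)..1, shiftedLegendre j x * shiftedLegendre k x =
      if j = k then (2 * k + 1 : ℝ)⁻¹ else 0 := by
  simp_rw [shiftedLegendre_eq_neg_one_pow_mul_aeval, mul_mul_mul_comm,
    intervalIntegral.integral_const_mul, integral_aeval_shiftedLegendre_mul_aeval_shiftedLegendre]
  split_ifs with h
  · rw [h, ← pow_add, ← two_mul, pow_mul, neg_one_sq, one_pow, one_mul]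
  · rw [mul_zero]

section Bessel

variable {ι E : Type*} [NormedAddCommGroup E] [NormedSpace ℝ E] [CompleteSpace E]

theorem ContinuousLinearMap.integral_apply_sum_smul_apply (B : E →L[ℝ] E →L[ℝ] ℝ) (a b : ℝ)
    (s : Finset ι) {ψ : ι → ℝ → ℝ} (hψ : ∀ k, Continuous (ψ k)) (v : ι → E) {w : ℝ → E}
    (hw : Continuous w) :
    ∫ x in a..b, B (∑ k ∈ s, ψ k x • v k) (w x) = ∑ k ∈ s, B (v k) (∫ x in a..b, ψ k x • w x) := by
  simp only [map_sum, map_smul, FunLike.coe_sum, Finset.sum_apply,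
    FunLike.coe_smul, Pi.smul_apply, smul_eq_mul]
  rw [intervalIntegral.integral_finsetSum fun k _ ↦ by
    apply Continuous.intervalIntegrable; fun_prop]
  refine Finset.sum_congr rfl fun k _ ↦ ?_
  rw [← (B (v k)).intervalIntegral_comp_comm (by apply Continuous.intervalIntegrable; fun_prop)]
  simp

theorem integral_smul_sum_smul_of_orthogonal [DecidableEq ι] {a b : ℝ} (s : Finset ι)
    {ψ : ι → ℝ → ℝ} (hψ : ∀ k, Continuous (ψ k)) {c : ι → ℝ} (hc : ∀ k ∈ s, c k ≠ 0)
    (horth : ∀ j ∈ s, ∀ k ∈ s, ∫ x in a..b, ψ j x * ψ k x = if j = k then (c k)⁻¹ else 0)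
    (v : ι → E) {k : ι} (hk : k ∈ s) :
    ∫ x in a..b, ψ k x • ∑ j ∈ s, ψ j x • c j • v j = v k := by
  have hsum (x : ℝ) : ψ k x • ∑ j ∈ s, ψ j x • c j • v j =
      ∑ j ∈ s, (ψ k x * ψ j x) • c j • v j := by
    simp [Finset.smul_sum, mul_smul]
  simp_rw [hsum]
  rw [intervalIntegral.integral_finsetSum fun j _ ↦ by
    apply Continuous.intervalIntegrable; fun_prop]
  simp_rw [intervalIntegral.integral_smul_const]
  rw [Finset.sum_congr rfl fun j hj ↦ congrArg (· • c j • v j) (horth k hk j hj)]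
  simp [ite_smul, smul_smul, inv_mul_cancel₀ (hc k hk), hk]

theorem ContinuousLinearMap.sum_mul_apply_integral_smul_le_integral_apply [DecidableEq ι]
    (B : E →L[ℝ] E →L[ℝ] ℝ) (hB : ∀ v, 0 ≤ B v v) {a b : ℝ} (hab : a ≤ b) {y : ℝ → E}
    (hy : Continuous y) (s : Finset ι) {ψ : ι → ℝ → ℝ} (hψ : ∀ k, Continuous (ψ k)) {c : ι → ℝ}
    (hc : ∀ k ∈ s, c k ≠ 0)
    (horth : ∀ j ∈ s, ∀ k ∈ s, ∫ x in a..b, ψ j x * ψ k x = if j = k then (c k)⁻¹ else 0) :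
    ∑ k ∈ s, c k * B (∫ x in a..b, ψ k x • y x) (∫ x in a..b, ψ k x • y x) ≤
      ∫ x in a..b, B (y x) (y x) := by
  set Ω : ι → E := fun k ↦ ∫ x in a..b, ψ k x • y x
  set p : ℝ → E := fun x ↦ ∑ k ∈ s, ψ k x • c k • Ω k
  have hp : Continuous p := by fun_prop
  have hpΩ : ∀ k ∈ s, ∫ x in a..b, ψ k x • p x = Ω k :=
    fun k hk ↦ integral_smul_sum_smul_of_orthogonal s hψ hc horth Ω hk
  -- `y` and `p` have the same moments `Ω k`, so every cross term is `∑ c k * B (Ω k) (Ω k)`.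
  have hcross : ∀ (B' : E →L[ℝ] E →L[ℝ] ℝ) (w : ℝ → E), Continuous w →
      (∀ k ∈ s, ∫ x in a..b, ψ k x • w x = Ω k) →
      ∫ x in a..b, B' (p x) (w x) = ∑ k ∈ s, c k * B' (Ω k) (Ω k) := by
    intro B' w hw hwΩ
    rw [B'.integral_apply_sum_smul_apply a b s hψ _ hw]
    refine Finset.sum_congr rfl fun k hk ↦ ?_
    rw [hwΩ k hk, map_smul, _root_.smul_apply, smul_eq_mul]
  have hexpand : ∀ x, B (y x - p x) (y x - p x) =
      B (y x) (y x) - B (p x) (y x) - B.flip (p x) (y x) + B (p x) (p x) := by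
    intro x
    simp only [map_sub, _root_.sub_apply, ContinuousLinearMap.flip_apply]
    abel
  have hrem : 0 ≤ ∫ x in a..b, B (y x - p x) (y x - p x) :=
    intervalIntegral.integral_nonneg hab fun x _ ↦ hB _
  simp_rw [hexpand] at hrem
  rw [intervalIntegral.integral_add, intervalIntegral.integral_sub, intervalIntegral.integral_sub,
    hcross B y hy fun _ _ ↦ rfl, hcross B.flip y hy fun _ _ ↦ rfl, hcross B p hp hpΩ] at hrem
  · simp only [ContinuousLinearMap.flip_apply] at hrem
    linarith
  all_goals apply Continuous.intervalIntegrable; fun_prop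

end Bessel

section Transport

open Set

variable {E F : Type*} [NormedAddCommGroup E] [NormedSpace ℝ E]
  [NormedAddCommGroup F] [NormedSpace ℝ F]

theorem DifferentiableAt.deriv_comp_prodMk_fst {f : ℝ × ℝ → F} {x t : ℝ}
    (hf : DifferentiableAt ℝ f (x, t)) :
    deriv (fun y ↦ f (y, t)) x = fderiv ℝ f (x, t) (1, 0) :=
  (hf.hasFDerivAt.comp_hasDerivAt x ((hasDerivAt_id x).prodMk (hasDerivAt_const x t))).deriv

theorem DifferentiableAt.deriv_comp_prodMk_snd {f : ℝ × ℝ → F} {x t : ℝ}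
    (hf : DifferentiableAt ℝ f (x, t)) :
    deriv (fun s ↦ f (x, s)) t = fderiv ℝ f (x, t) (0, 1) :=
  (hf.hasFDerivAt.comp_hasDerivAt t ((hasDerivAt_const t x).prodMk (hasDerivAt_id t))).deriv

theorem fderiv_comp_apply_eq_smul {Φ : E → F} {z : ℝ × ℝ → E} {p u v : ℝ × ℝ} {c : ℝ}
    (hΦ : DifferentiableAt ℝ Φ (z p)) (hz : DifferentiableAt ℝ z p)
    (h : fderiv ℝ z p u = c • fderiv ℝ z p v) :
    fderiv ℝ (fun q ↦ Φ (z q)) p u = c • fderiv ℝ (fun q ↦ Φ (z q)) p v := by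
  rw [fderiv_fun_comp p hΦ hz]
  simp [h]

theorem integral_balance_of_transport [CompleteSpace F] {g : ℝ × ℝ → F}
    (hg : Differentiable ℝ g) (ρ : ℝ) {a b t₀ t₁ : ℝ} (hab : a ≤ b) (ht₀₁ : t₀ ≤ t₁)
    (htr : ∀ x ∈ Icc a b, ∀ t ∈ Icc t₀ t₁,
      fderiv ℝ g (x, t) (0, 1) = -ρ • fderiv ℝ g (x, t) (1, 0)) :
    (∫ x in a..b, g (x, t₁)) - ∫ x in a..b, g (x, t₀) =
      ρ • ∫ t in t₀..t₁, (g (a, t) - g (b, t)) := by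
  have hgc : Continuous g := hg.continuous
  have hdiv : ∀ p ∈ [[a, b]] ×ˢ [[t₀, t₁]],
      (ρ • fderiv ℝ g p) (1, 0) + fderiv ℝ g p (0, 1) = 0 := by
    rintro ⟨x, t⟩ ⟨hx, ht⟩
    rw [uIcc_of_le hab] at hx
    rw [uIcc_of_le ht₀₁] at ht
    simp [htr x hx t ht]
  have := MeasureTheory.integral2_divergence_prod_of_hasFDerivAt (fun p ↦ ρ • g p) g
    (fun p ↦ ρ • fderiv ℝ g p) (fderiv ℝ g) a t₀ b t₁
    (hgc.const_smul ρ).continuousOn hgc.continuousOn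
    (fun p _ ↦ (hg p).hasFDerivAt.const_smul ρ) (fun p _ ↦ (hg p).hasFDerivAt)
    (MeasureTheory.integrableOn_zero.congr_fun (fun p hp ↦ (hdiv p hp).symm)
      (measurableSet_uIcc.prod measurableSet_uIcc))
  rw [intervalIntegral.integral_congr fun x hx ↦ intervalIntegral.integral_congr
    fun t ht ↦ hdiv (x, t) ⟨hx, ht⟩] at this
  simp only [intervalIntegral.integral_zero, intervalIntegral.integral_smul] at this
  rw [intervalIntegral.integral_sub (by apply Continuous.intervalIntegrable; fun_prop)
    (by apply Continuous.intervalIntegrable; fun_prop), smul_sub, ← sub_eq_zero, this]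
  abel

theorem ContinuousLinearMap.integral_apply_self_eq_of_transport (B : E →L[ℝ] E →L[ℝ] ℝ)
    {z : ℝ × ℝ → E} (hz : Differentiable ℝ z) (ρ : ℝ) {a b T : ℝ} (hab : a ≤ b) (hT : 0 ≤ T)
    (htr : ∀ x ∈ Icc a b, ∀ t ∈ Icc 0 T,
      fderiv ℝ z (x, t) (0, 1) = -ρ • fderiv ℝ z (x, t) (1, 0))
    (hinit : ∀ x ∈ Icc a b, z (x, 0) = 0) :
    ∫ x in a..b, B (z (x, T)) (z (x, T)) =
      ρ * ∫ t in (0)..T, (B (z (a, t)) (z (a, t)) - B (z (b, t)) (z (b, t))) := by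
  have hB : Differentiable ℝ fun v ↦ B v v := by fun_prop
  have h := integral_balance_of_transport (g := fun p ↦ B (z p) (z p)) (hB.comp hz) ρ hab hT
    fun x hx t ht ↦ fderiv_comp_apply_eq_smul (hB _) (hz _) (htr x hx t ht)
  have h₀ : ∫ x in a..b, B (z (x, 0)) (z (x, 0)) = 0 := by
    refine (intervalIntegral.integral_congr fun x hx ↦ ?_).trans intervalIntegral.integral_zero
    rw [uIcc_of_le hab] at hx
    simp [hinit x hx]
  rwa [h₀, sub_zero, smul_eq_mul] at h

end Transport

theorem intervalIntegral.integral_apply {ι : Type*} [Fintype ι] {f : ℝ → ι → ℝ} {a b : ℝ}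
    (hf : IntervalIntegrable f MeasureTheory.volume a b) (i : ι) :
    (∫ x in a..b, f x) i = ∫ x in a..b, f x i :=
  ((ContinuousLinearMap.proj i : (ι → ℝ) →L[ℝ] ℝ).intervalIntegral_comp_comm hf).symm

@[fun_prop]
theorem continuous_shiftedLegendre (k : ℕ) : Continuous (shiftedLegendre k) := by
  unfold shiftedLegendre
  fun_prop

theorem transport_IQC_terminal_cost_general
    (ρ : ℝ) (l N : ℕ)
    (S : Matrix (Fin l) (Fin l) ℝ)
    (hSpd : ∀ v : Fin l → ℝ, v ≠ 0 → 0 < v ⬝ᵥ S.mulVec v)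
    (z : ℝ × ℝ → Fin l → ℝ)
    (hz : ContDiff ℝ 1 z)
    (hpde : ∀ x ∈ Set.Icc (0:ℝ) 1, ∀ t ≥ (0:ℝ),
      deriv (fun s => z (x, s)) t = -ρ • deriv (fun y => z (y, t)) x)
    (hinit : ∀ x ∈ Set.Icc (0:ℝ) 1, z (x, 0) = 0)
    (Ω : ℕ → ℝ → Fin l → ℝ)
    (hΩ : ∀ k t i, Ω k t i = ∫ x in (0:ℝ)..1, z (x, t) i * shiftedLegendre k x) :
    ∀ T ≥ (0:ℝ),
      ρ * (∫ t in (0:ℝ)..T,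
          (z (0, t) ⬝ᵥ S.mulVec (z (0, t)) - z (1, t) ⬝ᵥ S.mulVec (z (1, t)))) -
        ∑ k ∈ range (N + 1), (2 * (k : ℝ) + 1) * (Ω k T ⬝ᵥ S.mulVec (Ω k T)) ≥ 0 := by
  intro T hT
  let B : (Fin l → ℝ) →L[ℝ] (Fin l → ℝ) →L[ℝ] ℝ :=
    (Matrix.toLinearMap₂' ℝ S : (Fin l → ℝ) →ₗ[ℝ] (Fin l → ℝ) →ₗ[ℝ] ℝ).toContinuousBilinearMap
  have hB (v w : Fin l → ℝ) : B v w = v ⬝ᵥ S *ᵥ w := Matrix.toLinearMap₂'_apply' S v w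
  have hBpos (v : Fin l → ℝ) : 0 ≤ B v v := by
    rcases eq_or_ne v 0 with rfl | hv
    · simp
    · exact hB v v ▸ (hSpd v hv).le
  have hzd : Differentiable ℝ z := hz.differentiable one_ne_zero
  have htr : ∀ x ∈ Set.Icc (0 : ℝ) 1, ∀ t ∈ Set.Icc 0 T,
      fderiv ℝ z (x, t) (0, 1) = -ρ • fderiv ℝ z (x, t) (1, 0) := fun x hx t ht ↦ by
    rw [← (hzd _).deriv_comp_prodMk_snd, ← (hzd _).deriv_comp_prodMk_fst, hpde x hx t ht.1]
  have hΩT (k : ℕ) : Ω k T = ∫ x in (0:ℝ)..1, shiftedLegendre k x • z (x, T) := by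
    ext i
    rw [hΩ, intervalIntegral.integral_apply (by apply Continuous.intervalIntegrable; fun_prop)]
    simp [mul_comm]
  have henergy := B.integral_apply_self_eq_of_transport hzd ρ zero_le_one hT htr hinit
  have hbessel := B.sum_mul_apply_integral_smul_le_integral_apply hBpos zero_le_one
    (y := fun x ↦ z (x, T)) (by fun_prop) (range (N + 1)) continuous_shiftedLegendre
    (c := fun k ↦ 2 * k + 1) (fun k _ ↦ by positivity)
    fun j _ k _ ↦ integral_shiftedLegendre_mul_shiftedLegendre j k
  simp only [hB, ← hΩT] at henergy hbessel
  linarith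

/-- **Lemma 1** (finite-horizon IQC with terminal cost for the transport
equation): for `S ≻ 0` symmetric and `z` a solution of `z_t = −ρ z_x` on
`[0,1] × [0,∞)` with zero initial condition, for every `T ≥ 0`,
`ρ ∫₀^T ( z(0,t)ᵀ S z(0,t) − z(1,t)ᵀ S z(1,t) ) dt
  − ∑_{k=0}^{N} (2k+1) Ω_k(T)ᵀ S Ω_k(T) ≥ 0`. -/
theorem transport_IQC_terminal_cost
    (ρ : ℝ) (hρ : 0 < ρ) (l N : ℕ)
    (S : Matrix (Fin l) (Fin l) ℝ) (hSsymm : S.IsSymm)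
    (hSpd : ∀ v : Fin l → ℝ, v ≠ 0 → 0 < v ⬝ᵥ S.mulVec v)
    (z : ℝ × ℝ → Fin l → ℝ)
    (hz : ContDiff ℝ 1 z)
    (hpde : ∀ x ∈ Set.Icc (0:ℝ) 1, ∀ t ≥ (0:ℝ),
      deriv (fun s => z (x, s)) t = -ρ • deriv (fun y => z (y, t)) x)
    (hinit : ∀ x ∈ Set.Icc (0:ℝ) 1, z (x, 0) = 0)
    (Ω : ℕ → ℝ → Fin l → ℝ)
    (hΩ : ∀ k t i, Ω k t i = ∫ x in (0:ℝ)..1, z (x, t) i * shiftedLegendre k x) :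
    ∀ T ≥ (0:ℝ),
      ρ * (∫ t in (0:ℝ)..T,
          (z (0, t) ⬝ᵥ S.mulVec (z (0, t)) - z (1, t) ⬝ᵥ S.mulVec (z (1, t)))) -
        ∑ k ∈ range (N + 1), (2 * (k : ℝ) + 1) * (Ω k T ⬝ᵥ S.mulVec (Ω k T)) ≥ 0 :=
  transport_IQC_terminal_cost_general ρ l N S hSpd z hz hpde hinit Ω hΩ
end

section
/- Let ρ > 0, l ∈ ℕ, let R ∈ ℝ^{l×l} be symmetric, and let z : [0,1] × [0,∞) → ℝ^l be continuously differentiable, satisfy the transport equation z_t(x,t) = −ρ z_x(x,t) for all (x,t) ∈ [0,1] × [0,∞), and have zero initial condition z(x,0) = 0 for all x ∈ [0,1]. Then for every T ≥ 0: ∫₀¹ (1−x) z(x,T)ᵀ R z(x,T) dx = ρ ∫₀^T ( z(0,t)ᵀ R z(0,t) − ∫₀¹ z(x,t)ᵀ R z(x,t) dx ) dt. -/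
open Matrix MeasureTheory Set
open scoped Interval

/-! The energy density `w = zᵀ R z` is transported along with `z` (chain rule), so
`w_t = -ρ w_x`. The field `(ρ (1 - x) w, (1 - x) w)` then has divergence `-ρ w`, and the
divergence theorem on `[0, 1] × [0, T]` gives the balance: the weight kills the outflow at
`x = 1`, and the initial condition kills the bottom edge `t = 0`. -/

section PartialDerivatives

variable {E : Type*} [NormedAddCommGroup E] [NormedSpace ℝ E] {z : ℝ × ℝ → E} {x t : ℝ}

theorem deriv_partial_snd_eq_fderiv_apply (hz : DifferentiableAt ℝ z (x, t)) :
    deriv (fun s => z (x, s)) t = fderiv ℝ z (x, t) (0, 1) :=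
  (hz.hasFDerivAt.comp_hasDerivAt t ((hasDerivAt_const t x).prodMk (hasDerivAt_id t))).deriv

theorem deriv_partial_fst_eq_fderiv_apply (hz : DifferentiableAt ℝ z (x, t)) :
    deriv (fun y => z (y, t)) x = fderiv ℝ z (x, t) (1, 0) :=
  (hz.hasFDerivAt.comp_hasDerivAt x ((hasDerivAt_id x).prodMk (hasDerivAt_const x t))).deriv

end PartialDerivatives

theorem fderiv_comp_apply_eq_smul_of_fderiv_apply_eq_smul
    {E F G : Type*} [NormedAddCommGroup E] [NormedSpace ℝ E] [NormedAddCommGroup F]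
    [NormedSpace ℝ F] [NormedAddCommGroup G] [NormedSpace ℝ G]
    {W : F → G} {z : E → F} {p u v : E} {c : ℝ}
    (hW : DifferentiableAt ℝ W (z p)) (hz : DifferentiableAt ℝ z p)
    (h : fderiv ℝ z p v = c • fderiv ℝ z p u) :
    fderiv ℝ (W ∘ z) p v = c • fderiv ℝ (W ∘ z) p u := by
  simp only [fderiv_comp p hW hz, ContinuousLinearMap.comp_apply, h, map_smul]

theorem differentiable_dotProduct_mulVec_self {𝕜 n : Type*} [NontriviallyNormedField 𝕜]
    [Fintype n] (R : Matrix n n 𝕜) : Differentiable 𝕜 fun u : n → 𝕜 => u ⬝ᵥ R *ᵥ u := by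
  simp only [mulVec, dotProduct]
  fun_prop

theorem intervalIntegral_intervalIntegral_swap_of_continuous
    {E : Type*} [NormedAddCommGroup E] [NormedSpace ℝ E] [CompleteSpace E]
    {F : ℝ × ℝ → E} {a b c d : ℝ} (hF : Continuous F) :
    ∫ x in a..b, ∫ t in c..d, F (x, t) = ∫ t in c..d, ∫ x in a..b, F (x, t) :=
  intervalIntegral_intervalIntegral_swap <|
    (hF.continuousOn.integrableOn_compact (isCompact_uIcc.prod isCompact_uIcc)).mono_set
      (prod_mono uIoc_subset_uIcc uIoc_subset_uIcc)

section WeightedBalance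

variable {w : ℝ × ℝ → ℝ} {ρ T : ℝ}

theorem hasFDerivAt_one_sub_fst_mul (hw : Differentiable ℝ w) (p : ℝ × ℝ) :
    HasFDerivAt (fun q : ℝ × ℝ => (1 - q.1) * w q)
      ((1 - p.1) • fderiv ℝ w p - w p • ContinuousLinearMap.fst ℝ ℝ ℝ) p := by
  have hcoef : HasFDerivAt (fun q : ℝ × ℝ => 1 - q.1) (-ContinuousLinearMap.fst ℝ ℝ ℝ) p := by
    simpa using (hasFDerivAt_const (1 : ℝ) p).fun_sub (hasFDerivAt_fst (𝕜 := ℝ) (p := p))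
  simpa [sub_eq_add_neg] using hcoef.fun_mul (hw p).hasFDerivAt

theorem weighted_energy_balance_of_transport (hw : Differentiable ℝ w)
    (htransport : ∀ p ∈ [[(0:ℝ), 1]] ×ˢ [[(0:ℝ), T]],
      fderiv ℝ w p (0, 1) = -ρ * fderiv ℝ w p (1, 0)) :
    (∫ x in (0:ℝ)..1, (1 - x) * w (x, T)) - ∫ x in (0:ℝ)..1, (1 - x) * w (x, 0) =
      ρ * ∫ t in (0:ℝ)..T, (w (0, t) - ∫ x in (0:ℝ)..1, w (x, t)) := by
  have hw_cont := hw.continuous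
  set g' : ℝ × ℝ → ℝ × ℝ →L[ℝ] ℝ :=
    fun p => (1 - p.1) • fderiv ℝ w p - w p • ContinuousLinearMap.fst ℝ ℝ ℝ
  have hdiv : ∀ p ∈ [[(0:ℝ), 1]] ×ˢ [[(0:ℝ), T]],
      (ρ • g' p) (1, 0) + g' p (0, 1) = -ρ * w p := by
    intro p hp
    simp only [g', _root_.sub_apply, _root_.smul_apply, smul_eq_mul,
      ContinuousLinearMap.coe_fst', htransport p hp]
    ring
  have hdiv_integral :
      (∫ x in (0:ℝ)..1, ∫ t in (0:ℝ)..T, (ρ • g' (x, t)) (1, 0) + g' (x, t) (0, 1)) =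
        -ρ * ∫ t in (0:ℝ)..T, ∫ x in (0:ℝ)..1, w (x, t) := by
    rw [← intervalIntegral_intervalIntegral_swap_of_continuous hw_cont,
      ← intervalIntegral.integral_const_mul]
    refine intervalIntegral.integral_congr fun x hx => ?_
    rw [← intervalIntegral.integral_const_mul]
    exact intervalIntegral.integral_congr fun t ht => hdiv (x, t) ⟨hx, ht⟩
  have hgreen := integral2_divergence_prod_of_hasFDerivAt
    (fun q => ρ * ((1 - q.1) * w q)) (fun q => (1 - q.1) * w q) (fun p => ρ • g' p) g'
    0 0 1 T (by fun_prop) (by fun_prop)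
    (fun p _ => (hasFDerivAt_one_sub_fst_mul hw p).const_mul ρ)
    (fun p _ => hasFDerivAt_one_sub_fst_mul hw p)
    (((continuous_const.mul hw_cont).continuousOn.integrableOn_compact
      (isCompact_uIcc.prod isCompact_uIcc)).congr_fun (fun p hp => (hdiv p hp).symm)
      (measurableSet_uIcc.prod measurableSet_uIcc))
  simp only [sub_self, zero_mul, mul_zero, intervalIntegral.integral_zero, sub_zero, one_mul,
    add_zero, hdiv_integral, intervalIntegral.integral_const_mul] at hgreen
  have hw_boundary : Continuous fun t => w (0, t) := by fun_prop
  have hw_slice : Continuous fun t => ∫ x in (0:ℝ)..1, w (x, t) :=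
    intervalIntegral.continuous_parametric_intervalIntegral_of_continuous'
      (f := fun t x => w (x, t)) (by fun_prop) 0 1
  rw [intervalIntegral.integral_sub (hw_boundary.intervalIntegrable _ _)
    (hw_slice.intervalIntegrable _ _)]
  linarith

end WeightedBalance

theorem transport_weighted_energy_balance_general
    (ρ : ℝ) (l : ℕ)
    (R : Matrix (Fin l) (Fin l) ℝ)
    (z : ℝ × ℝ → Fin l → ℝ)
    (hz : ContDiff ℝ 1 z)
    (hpde : ∀ x ∈ Set.Icc (0:ℝ) 1, ∀ t ≥ (0:ℝ),
      deriv (fun s => z (x, s)) t = -ρ • deriv (fun y => z (y, t)) x)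
    (hinit : ∀ x ∈ Set.Icc (0:ℝ) 1, z (x, 0) = 0) :
    ∀ T ≥ (0:ℝ),
      ∫ x in (0:ℝ)..1, (1 - x) * (z (x, T) ⬝ᵥ R.mulVec (z (x, T))) =
        ρ * ∫ t in (0:ℝ)..T,
          (z (0, t) ⬝ᵥ R.mulVec (z (0, t)) -
            ∫ x in (0:ℝ)..1, z (x, t) ⬝ᵥ R.mulVec (z (x, t))) := by
  intro T hT
  have hz_diff : Differentiable ℝ z := hz.differentiable one_ne_zero
  have hW := differentiable_dotProduct_mulVec_self R
  have hw_transport : ∀ p ∈ [[(0:ℝ), 1]] ×ˢ [[(0:ℝ), T]],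
      fderiv ℝ ((fun u => u ⬝ᵥ R *ᵥ u) ∘ z) p (0, 1) =
        -ρ * fderiv ℝ ((fun u => u ⬝ᵥ R *ᵥ u) ∘ z) p (1, 0) := by
    rintro ⟨x, t⟩ ⟨hx, ht⟩
    rw [uIcc_of_le zero_le_one] at hx
    rw [uIcc_of_le hT] at ht
    refine fderiv_comp_apply_eq_smul_of_fderiv_apply_eq_smul (hW _) (hz_diff _) ?_
    rw [← deriv_partial_snd_eq_fderiv_apply (hz_diff _),
      ← deriv_partial_fst_eq_fderiv_apply (hz_diff _)]
    exact hpde x hx t ht.1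
  have hinit_energy : ∫ x in (0:ℝ)..1, (1 - x) * (z (x, 0) ⬝ᵥ R *ᵥ z (x, 0)) = 0 := by
    rw [intervalIntegral.integral_congr (g := fun _ => 0) fun x hx => ?_,
      intervalIntegral.integral_zero]
    rw [uIcc_of_le zero_le_one] at hx
    simp [hinit x hx]
  simpa only [Function.comp_apply, hinit_energy, sub_zero] using
    weighted_energy_balance_of_transport (hW.comp hz_diff) hw_transport

/-- Weighted energy balance for the transport equation: if `z_t = −ρ z_x` on
`[0,1] × [0,∞)` with `z(·,0) = 0` and `R = Rᵀ`, then for every `T ≥ 0`,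
`∫₀¹ (1−x) z(x,T)ᵀ R z(x,T) dx
   = ρ ∫₀^T ( z(0,t)ᵀ R z(0,t) − ∫₀¹ z(x,t)ᵀ R z(x,t) dx ) dt`. -/
theorem transport_weighted_energy_balance
    (ρ : ℝ) (hρ : 0 < ρ) (l : ℕ)
    (R : Matrix (Fin l) (Fin l) ℝ) (hR : R.IsSymm)
    (z : ℝ × ℝ → Fin l → ℝ)
    (hz : ContDiff ℝ 1 z)
    (hpde : ∀ x ∈ Set.Icc (0:ℝ) 1, ∀ t ≥ (0:ℝ),
      deriv (fun s => z (x, s)) t = -ρ • deriv (fun y => z (y, t)) x)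
    (hinit : ∀ x ∈ Set.Icc (0:ℝ) 1, z (x, 0) = 0) :
    ∀ T ≥ (0:ℝ),
      ∫ x in (0:ℝ)..1, (1 - x) * (z (x, T) ⬝ᵥ R.mulVec (z (x, T))) =
        ρ * ∫ t in (0:ℝ)..T,
          (z (0, t) ⬝ᵥ R.mulVec (z (0, t)) -
            ∫ x in (0:ℝ)..1, z (x, t) ⬝ᵥ R.mulVec (z (x, t))) :=
  transport_weighted_energy_balance_general ρ l R z hz hpde hinit
end

section
/- (Finsler's lemma, strict form) Let Q ∈ ℝ^{n×n} be symmetric and K ∈ ℝ^{m×n}. If xᵀ Q x < 0 for every nonzero x ∈ ℝ^n with K x = 0, then there exists σ > 0 such that Q − σ Kᵀ K is negative definite, i.e., xᵀ(Q − σ KᵀK)x < 0 for all nonzero x ∈ ℝ^n. -/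
/-!
On a compact set `S`, the open sets `{x | f x - (k + 1) * g x < 0}` increase with `k` (as `g ≥ 0`)
and cover `S`: where `g` vanishes because `f < 0` there, elsewhere by the Archimedean property. So
one of them contains `S`. Applied on the unit sphere to `f x = xᵀQx` and `g x = |Kx|² = xᵀKᵀKx`,
this gives `σ`, and homogeneity of quadratic forms extends the inequality to all `x ≠ 0`.
-/

open Matrix

theorem IsCompact.exists_pos_forall_sub_mul_neg {X : Type*} [TopologicalSpace X] {S : Set X}
    (hS : IsCompact S) {f g : X → ℝ} (hf : Continuous f) (hg : Continuous g)
    (hg_nonneg : ∀ x, 0 ≤ g x) (hfg : ∀ x ∈ S, g x = 0 → f x < 0) :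
    ∃ σ : ℝ, 0 < σ ∧ ∀ x ∈ S, f x - σ * g x < 0 := by
  let U : ℕ → Set X := fun k => {x | f x - (k + 1) * g x < 0}
  have hU_mono : Monotone U := fun k l hkl x (hx : f x - (k + 1) * g x < 0) => by
    show f x - (l + 1) * g x < 0
    have : (k : ℝ) ≤ l := by exact_mod_cast hkl
    nlinarith [hg_nonneg x]
  have hS_cover : S ⊆ ⋃ k, U k := by
    intro x hx
    rcases (hg_nonneg x).eq_or_lt with hgx | hgx
    · exact Set.mem_iUnion.2 ⟨0, by simp [U, ← hgx, hfg x hx hgx.symm]⟩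
    · obtain ⟨k, hk⟩ := exists_nat_gt (f x / g x)
      refine Set.mem_iUnion.2 ⟨k, ?_⟩
      show f x - (k + 1) * g x < 0
      rw [div_lt_iff₀ hgx] at hk
      nlinarith
  obtain ⟨k, hk⟩ := hS.elim_directed_cover U
    (fun k => isOpen_lt (hf.sub (continuous_const.mul hg)) continuous_const)
    hS_cover hU_mono.directed_le
  exact ⟨k + 1, k.cast_add_one_pos, hk⟩

variable {ι κ : Type*} [Fintype ι] [Fintype κ]

theorem Matrix.continuous_dotProduct_mulVec_self (A : Matrix ι ι ℝ) :
    Continuous fun x : ι → ℝ => x ⬝ᵥ A *ᵥ x := by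
  fun_prop

theorem Matrix.smul_dotProduct_mulVec_smul (A : Matrix ι ι ℝ) (c : ℝ) (x : ι → ℝ) :
    c • x ⬝ᵥ A *ᵥ (c • x) = c ^ 2 * (x ⬝ᵥ A *ᵥ x) := by
  simp only [mulVec_smul, dotProduct_smul, smul_dotProduct, smul_eq_mul]
  ring

theorem Matrix.dotProduct_transpose_mul_self_mulVec (K : Matrix κ ι ℝ) (x : ι → ℝ) :
    x ⬝ᵥ (Kᵀ * K) *ᵥ x = K *ᵥ x ⬝ᵥ K *ᵥ x := by
  rw [← mulVec_mulVec, dotProduct_mulVec, vecMul_transpose]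

theorem Matrix.dotProduct_sub_smul_mulVec (A B : Matrix ι ι ℝ) (σ : ℝ) (x : ι → ℝ) :
    x ⬝ᵥ (A - σ • B) *ᵥ x = x ⬝ᵥ A *ᵥ x - σ * (x ⬝ᵥ B *ᵥ x) := by
  simp [sub_mulVec, dotProduct_sub, smul_mulVec, dotProduct_smul]

theorem Matrix.dotProduct_mulVec_neg_of_forall_sphere {A : Matrix ι ι ℝ}
    (hA : ∀ x ∈ Metric.sphere (0 : ι → ℝ) 1, x ⬝ᵥ A *ᵥ x < 0) {x : ι → ℝ} (hx : x ≠ 0) :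
    x ⬝ᵥ A *ᵥ x < 0 := by
  have hx' : ‖x‖ ≠ 0 := norm_ne_zero_iff.2 hx
  have hu := hA (‖x‖⁻¹ • x) (by simp [norm_smul, hx'])
  rw [smul_dotProduct_mulVec_smul] at hu
  exact neg_of_mul_neg_right hu (by positivity)

theorem finsler_lemma_general
    (n m : ℕ)
    (Q : Matrix (Fin n) (Fin n) ℝ)
    (K : Matrix (Fin m) (Fin n) ℝ)
    (h : ∀ x : Fin n → ℝ, x ≠ 0 → K.mulVec x = 0 → x ⬝ᵥ Q.mulVec x < 0) :
    ∃ σ : ℝ, 0 < σ ∧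
      ∀ x : Fin n → ℝ, x ≠ 0 →
        x ⬝ᵥ (Q - σ • (Kᵀ * K)).mulVec x < 0 := by
  obtain ⟨σ, hσ, hsphere⟩ := (isCompact_sphere (0 : Fin n → ℝ) 1).exists_pos_forall_sub_mul_neg
    Q.continuous_dotProduct_mulVec_self (Kᵀ * K).continuous_dotProduct_mulVec_self
    (fun x => by rw [dotProduct_transpose_mul_self_mulVec]; exact Finset.sum_nonneg fun i _ => mul_self_nonneg _)
    (fun x hx hKx => h x (ne_zero_of_mem_unit_sphere ⟨x, hx⟩) <| by
      rwa [dotProduct_transpose_mul_self_mulVec, dotProduct_self_eq_zero] at hKx)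
  refine ⟨σ, hσ, fun x hx => dotProduct_mulVec_neg_of_forall_sphere (fun y hy => ?_) hx⟩
  rw [dotProduct_sub_smul_mulVec]
  exact hsphere y hy

/-- **Finsler's lemma, strict form.** Let `Q` be symmetric and `K` a matrix.
If `xᵀ Q x < 0` for every nonzero `x` with `K x = 0`, then there exists
`σ > 0` such that `Q − σ Kᵀ K` is negative definite. -/
theorem finsler_lemma
    (n m : ℕ)
    (Q : Matrix (Fin n) (Fin n) ℝ) (hQ : Q.IsSymm)
    (K : Matrix (Fin m) (Fin n) ℝ)
    (h : ∀ x : Fin n → ℝ, x ≠ 0 → K.mulVec x = 0 → x ⬝ᵥ Q.mulVec x < 0) :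
    ∃ σ : ℝ, 0 < σ ∧
      ∀ x : Fin n → ℝ, x ≠ 0 →
        x ⬝ᵥ (Q - σ • (Kᵀ * K)).mulVec x < 0 :=
  finsler_lemma_general n m Q K h
end
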